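/- Let A ∈ ℝ^{d×d} be symmetric positive definite, let V : ℝ^d → ℝ be differentiable, m-relatively strongly convex and M-relatively smooth with respect to ‖·‖_{A⁻¹} with 0 < m ≤ M, and let 0 < h ≤ 1/M. Then for every x, y ∈ ℝ^d, with x⁺ = x − h A ∇V(x), the evolution variational inequality holds: ‖x⁺ − y‖²_{A⁻¹} ≤ (1 − m h) ‖x − y‖²_{A⁻¹} − 2h (V(x⁺) − V(y)). -/

import Mathlib

open scoped RealInnerProductSpace
open Matrix MeasureTheory

/-- Matrix–vector multiplication viewed as a map on Euclidean space. -/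
noncomputable def mv {d : ℕ} (A : Matrix (Fin d) (Fin d) ℝ) (x : EuclideanSpace ℝ (Fin d)) :
    EuclideanSpace ℝ (Fin d) := WithLp.toLp 2 (A.mulVec x)

/-- Quadratic form `xᵀ B x`, i.e. the squared norm `‖x‖_B²`. -/
noncomputable def qf {d : ℕ} (B : Matrix (Fin d) (Fin d) ℝ) (x : EuclideanSpace ℝ (Fin d)) : ℝ :=
  ⟪x, mv B x⟫

/-- The norm `‖x‖_B = √(xᵀ B x)`. -/
noncomputable def bnorm {d : ℕ} (B : Matrix (Fin d) (Fin d) ℝ) (x : EuclideanSpace ℝ (Fin d)) : ℝ :=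
  Real.sqrt (qf B x)

lemma inner_mv {d : ℕ} (B : Matrix (Fin d) (Fin d) ℝ) (u v : EuclideanSpace ℝ (Fin d)) :
    ⟪u, mv B v⟫ = u ⬝ᵥ B.mulVec v := by
  simp [mv, PiLp.inner_apply, RCLike.inner_apply, dotProduct, mul_comm]

lemma mv_sub {d : ℕ} (B : Matrix (Fin d) (Fin d) ℝ) (u v : EuclideanSpace ℝ (Fin d)) :
    mv B (u - v) = mv B u - mv B v := by
  ext i
  simp only [mv, PiLp.sub_apply]
  show B.mulVec (WithLp.ofLp (u - v)) i = _
  rw [WithLp.ofLp_sub, Matrix.mulVec_sub]; rfl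

lemma mv_smul {d : ℕ} (B : Matrix (Fin d) (Fin d) ℝ) (c : ℝ) (v : EuclideanSpace ℝ (Fin d)) :
    mv B (c • v) = c • mv B v := by
  ext i
  simp only [mv, PiLp.smul_apply, smul_eq_mul]
  show B.mulVec (WithLp.ofLp (c • v)) i = _
  rw [WithLp.ofLp_smul, Matrix.mulVec_smul]; rfl

lemma inner_mv_symm {d : ℕ} (B : Matrix (Fin d) (Fin d) ℝ) (hB : Bᵀ = B)
    (u v : EuclideanSpace ℝ (Fin d)) : ⟪u, mv B v⟫ = ⟪v, mv B u⟫ := by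
  rw [inner_mv, inner_mv, Matrix.dotProduct_mulVec, ← Matrix.mulVec_transpose, hB,
    dotProduct_comm]

lemma qf_sub_expand {d : ℕ} (B : Matrix (Fin d) (Fin d) ℝ) (hB : Bᵀ = B)
    (u w : EuclideanSpace ℝ (Fin d)) :
    qf B (u - w) = qf B u - 2 * ⟪u, mv B w⟫ + qf B w := by
  simp only [qf, mv_sub, inner_sub_left, inner_sub_right]
  rw [inner_mv_symm B hB w u]
  ring

/-- the evolution variational inequality (EVI) for the preconditioned
gradient step (from the proof of Theorem 2). -/
theorem preconditioned_evi {d : ℕ}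
    (A : Matrix (Fin d) (Fin d) ℝ) (hA : A.PosDef)
    (V : EuclideanSpace ℝ (Fin d) → ℝ) (hV : Differentiable ℝ V)
    (m M : ℝ) (hm : 0 < m) (hmM : m ≤ M)
    (hconv : ∀ x y, V x + ⟪gradient V x, y - x⟫ + (m / 2) * qf A⁻¹ (y - x) ≤ V y)
    (hsmooth : ∀ x y, V y ≤ V x + ⟪gradient V x, y - x⟫ + (M / 2) * qf A⁻¹ (y - x))
    (h : ℝ) (hh : 0 < h) (hhM : h ≤ 1 / M)
    (x y : EuclideanSpace ℝ (Fin d)) :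
    qf A⁻¹ (x - h • mv A (gradient V x) - y) ≤
      (1 - m * h) * qf A⁻¹ (x - y) - 2 * h * (V (x - h • mv A (gradient V x)) - V y) := by
  have hM : 0 < M := lt_of_lt_of_le hm hmM
  set g := gradient V x with hg
  set w : EuclideanSpace ℝ (Fin d) := h • mv A g with hw
  have hAsym : Aᵀ = A := by
    have := hA.1
    simpa [Matrix.IsHermitian] using this
  have hBsym : (A⁻¹)ᵀ = A⁻¹ := by rw [Matrix.transpose_nonsing_inv, hAsym]
  have hdet : IsUnit A.det := isUnit_iff_ne_zero.mpr hA.det_pos.ne'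
  have hmvBA : mv A⁻¹ (mv A g) = g := by
    ext i
    show A⁻¹.mulVec (A.mulVec g) i = g i
    rw [Matrix.mulVec_mulVec, Matrix.nonsing_inv_mul A hdet, Matrix.one_mulVec]
  set q : ℝ := ⟪g, mv A g⟫ with hq
  have hq0 : 0 ≤ q := by
    have := hA.posSemidef.dotProduct_mulVec_nonneg g
    rw [hq, inner_mv]
    simpa using this
  have hmvBw : mv A⁻¹ w = h • g := by rw [hw, mv_smul, hmvBA]
  have hqfw : qf A⁻¹ w = h ^ 2 * q := by
    rw [qf, hmvBw, hw, inner_smul_left, inner_smul_right, real_inner_comm]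
    simp [hq]
    ring
  have hinner_uw : ∀ u, ⟪u, mv A⁻¹ w⟫ = h * ⟪g, u⟫ := by
    intro u
    rw [hmvBw, inner_smul_right, real_inner_comm]
  -- expansion of the step
  have hE1 : qf A⁻¹ (x - w - y) = qf A⁻¹ (x - y) - 2 * h * ⟪g, x - y⟫ + h ^ 2 * q := by
    rw [sub_right_comm, qf_sub_expand A⁻¹ hBsym (x - y) w, hinner_uw, hqfw]
    ring
  have hE2 : qf A⁻¹ (x - w - x) = h ^ 2 * q := by
    rw [sub_right_comm, qf_sub_expand A⁻¹ hBsym (x - x) w, hqfw, hinner_uw]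
    simp [qf]
  -- smoothness at x⁺
  have hstep : V (x - w) ≤ V x - h * q + M / 2 * (h ^ 2 * q) := by
    have := hsmooth x (x - w)
    rw [hE2] at this
    have hxw : (x - w) - x = -w := by abel
    rw [hxw, inner_neg_right, hw, inner_smul_right] at this
    rw [← hq, ← hw] at this
    linarith
  have hstep' : V (x - w) ≤ V x - h / 2 * q := by
    have h1 : M * h ≤ 1 := by
      rw [le_div_iff₀ hM] at hhM
      linarith
    nlinarith [mul_nonneg (sq_nonneg h) hq0, mul_le_mul_of_nonneg_right h1 (mul_nonneg hh.le hq0)]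
  -- convexity
  have hconv' : V x - V y + m / 2 * qf A⁻¹ (x - y) ≤ ⟪g, x - y⟫ := by
    have := hconv x y
    have hyx : qf A⁻¹ (y - x) = qf A⁻¹ (x - y) := by
      have : y - x = -(x - y) := by abel
      rw [this, qf]
      have : mv A⁻¹ (-(x - y)) = -(mv A⁻¹ (x - y)) := by
        have := mv_smul A⁻¹ (-1 : ℝ) (x - y)
        simpa using this
      rw [this, inner_neg_neg]; rfl
    rw [hyx] at this
    have hflip : ⟪g, y - x⟫ = -⟪g, x - y⟫ := by
      have : y - x = -(x - y) := by abel
      rw [this, inner_neg_right]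
    rw [hflip] at this
    linarith
  rw [hE1]
  nlinarith [mul_le_mul_of_nonneg_left hconv' (by linarith : (0:ℝ) ≤ 2 * h)]
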